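/- Let G=(V,E) be a connected finite weighted graph, z_1,…,z_k distinct vertices, n_1,…,n_k positive integers, N = n_1 + ⋯ + n_k, and δ_{z_s}(x) = 1/μ(z_s) if x = z_s and 0 otherwise. Then the Bogomol'nyi equation Δu = e^u − 1 + 4π Σ_{s=1}^k n_s δ_{z_s} on V admits a (unique) solution if and only if 4πN < |V|, where |V| = Σ_{x∈V} μ(x). -/

import Mathlib

/-!
Write the equation as `Δu = eᵘ - g` with `g = 1 - 4π Σ nₛ δ_{zₛ}`, so that `∫ g dμ = |V| - 4πN`.
Integrating against `μ` kills the Laplacian, hence `∫ g dμ = ∫ eᵘ dμ > 0` is necessary.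
Conversely, solutions are the critical points of the convex energy
`J u = ¼ Σₓ Σᵧ wₓᵧ (u y - u x)² + Σₓ μₓ (e^{u x} - g x u x)`. If `∫ g dμ > 0`, `J` is coercive:
split `u = ū + v` with `v` of mean zero; the Poincaré inequality (connectedness plus compactness
of the unit sphere) controls `v` through the quadratic term, and Jensen's inequality bounds the
rest below by `|V| e^ū - ū ∫ g dμ`, which controls `ū`. So `J` attains its minimum. Uniqueness:
testing the difference of two equations against `u₁ - u₂` gives
`-½ Σ wₓᵧ (…)² = Σ μₓ (u₁ - u₂)(e^{u₁} - e^{u₂}) ≥ 0`, and `exp` is strictly increasing.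
-/

open Finset Real Filter Topology

variable {V : Type*}

/-- Graph Laplacian: Δu(x) = (1/μ x) Σ_y w x y (u y - u x). -/
noncomputable def lap [Fintype V] (w : V → V → ℝ) (μ : V → ℝ) (u : V → ℝ) (x : V) : ℝ :=
  (1 / μ x) * ∑ y, w x y * (u y - u x)

/-- Gradient form Γ(u,v)(x). -/
noncomputable def gam [Fintype V] (w : V → V → ℝ) (μ : V → ℝ) (u v : V → ℝ) (x : V) : ℝ :=
  (1 / (2 * μ x)) * ∑ y, w x y * (u y - u x) * (v y - v x)

/-- Integral over V: ∫_V f dμ = Σ_x μ x * f x. -/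
noncomputable def intV [Fintype V] (μ : V → ℝ) (f : V → ℝ) : ℝ := ∑ x, μ x * f x

/-- Dirac mass at z. -/
noncomputable def dirac [DecidableEq V] (μ : V → ℝ) (z : V) (x : V) : ℝ :=
  if x = z then 1 / μ z else 0

noncomputable def dirichletSum [Fintype V] (w : V → V → ℝ) (u : V → ℝ) : ℝ :=
  ∑ x, ∑ y, w x y * (u y - u x) ^ 2

-- `dirichletSum` counts each edge twice; the `/ 4` makes `Δu = eᵘ - g` the Euler–Lagrange equation.
noncomputable def bogomolnyiEnergy [Fintype V] (w : V → V → ℝ) (μ g : V → ℝ) (u : V → ℝ) : ℝ :=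
  dirichletSum w u / 4 + ∑ x, μ x * (exp (u x) - g x * u x)

section Laplacian

variable [Fintype V] {w : V → V → ℝ} {μ : V → ℝ}

lemma mul_lap {x : V} (hμ : μ x ≠ 0) (u : V → ℝ) :
    μ x * lap w μ u x = ∑ y, w x y * (u y - u x) := by
  rw [lap, ← mul_assoc, mul_one_div_cancel hμ, one_mul]

lemma lap_sub (u v : V → ℝ) (x : V) : lap w μ (u - v) x = lap w μ u x - lap w μ v x := by
  simp only [lap, Pi.sub_apply, ← mul_sub, ← sum_sub_distrib]
  congr 1
  exact sum_congr rfl fun y _ => by ring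

lemma sum_mul_mul_lap (hsym : ∀ x y, w x y = w y x) (hμ : ∀ x, μ x ≠ 0) (φ u : V → ℝ) :
    ∑ x, μ x * φ x * lap w μ u x =
      -(∑ x, ∑ y, w x y * (φ y - φ x) * (u y - u x)) / 2 := by
  have hlap : ∑ x, μ x * φ x * lap w μ u x = ∑ x, ∑ y, w x y * φ x * (u y - u x) := by
    refine sum_congr rfl fun x _ => ?_
    rw [mul_right_comm, mul_lap (hμ x), sum_mul]
    exact sum_congr rfl fun y _ => by ring
  have hswap : ∑ x, ∑ y, w x y * φ y * (u y - u x) =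
      -∑ x, ∑ y, w x y * φ x * (u y - u x) := by
    rw [sum_comm, ← sum_neg_distrib]
    refine sum_congr rfl fun x _ => ?_
    rw [← sum_neg_distrib]
    exact sum_congr rfl fun y _ => by rw [hsym]; ring
  have hsplit : ∑ x, ∑ y, w x y * (φ y - φ x) * (u y - u x) =
      ∑ x, ∑ y, w x y * φ y * (u y - u x) - ∑ x, ∑ y, w x y * φ x * (u y - u x) := by
    rw [← sum_sub_distrib]
    refine sum_congr rfl fun x _ => ?_
    rw [← sum_sub_distrib]
    exact sum_congr rfl fun y _ => by ring
  rw [hsplit, hswap, hlap]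
  ring

lemma sum_mul_lap (hsym : ∀ x y, w x y = w y x) (hμ : ∀ x, μ x ≠ 0) (u : V → ℝ) :
    ∑ x, μ x * lap w μ u x = 0 := by
  simpa using sum_mul_mul_lap hsym hμ 1 u

lemma sum_mul_self_mul_lap (hsym : ∀ x y, w x y = w y x) (hμ : ∀ x, μ x ≠ 0) (u : V → ℝ) :
    ∑ x, μ x * u x * lap w μ u x = -dirichletSum w u / 2 := by
  rw [sum_mul_mul_lap hsym hμ, dirichletSum]
  simp only [mul_assoc, ← sq]

end Laplacian

section DirichletSum

variable [Fintype V] {w : V → V → ℝ}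

lemma dirichletSum_nonneg (hnn : ∀ x y, 0 ≤ w x y) (u : V → ℝ) : 0 ≤ dirichletSum w u :=
  sum_nonneg fun x _ => sum_nonneg fun y _ => mul_nonneg (hnn x y) (sq_nonneg _)

lemma dirichletSum_smul (c : ℝ) (u : V → ℝ) :
    dirichletSum w (c • u) = c ^ 2 * dirichletSum w u := by
  simp only [dirichletSum, mul_sum, Pi.smul_apply, smul_eq_mul]
  exact sum_congr rfl fun x _ => sum_congr rfl fun y _ => by ring

lemma dirichletSum_sub_const (u : V → ℝ) (a : ℝ) :
    dirichletSum w (fun x => u x - a) = dirichletSum w u := by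
  simp only [dirichletSum, sub_sub_sub_cancel_right]

lemma continuous_dirichletSum : Continuous (dirichletSum (V := V) w) := by
  unfold dirichletSum
  fun_prop

lemma eq_of_dirichletSum_eq_zero (hnn : ∀ x y, 0 ≤ w x y)
    (hconn : (SimpleGraph.fromRel fun x y => 0 < w x y).Connected) {u : V → ℝ}
    (hu : dirichletSum w u = 0) (x y : V) : u x = u y := by
  have hterm : ∀ x y, w x y * (u y - u x) ^ 2 = 0 := fun x y =>
    (sum_eq_zero_iff_of_nonneg fun y _ => mul_nonneg (hnn x y) (sq_nonneg _)).1
      ((sum_eq_zero_iff_of_nonneg fun x _ => sum_nonneg fun y _ =>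
        mul_nonneg (hnn x y) (sq_nonneg _)).1 hu x (mem_univ x)) y (mem_univ y)
  have hadj : ∀ x y, 0 < w x y → u x = u y := fun x y hw => by
    have := (mul_eq_zero.1 (hterm x y)).resolve_left hw.ne'
    linarith [pow_eq_zero_iff (n := 2) two_ne_zero |>.1 this]
  obtain ⟨p⟩ := hconn.preconnected x y
  induction p with
  | nil => rfl
  | cons h _ ih =>
    rcases (SimpleGraph.fromRel_adj _ _ _).1 h |>.2 with hw | hw
    · exact (hadj _ _ hw).trans ih
    · exact (hadj _ _ hw).symm.trans ih

end DirichletSum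

lemma exists_pos_mul_norm_sq_le {E : Type*} [NormedAddCommGroup E] [NormedSpace ℝ E]
    [ProperSpace E] {S : Set E} (hS : IsClosed S) (hsmul : ∀ v ∈ S, ∀ t : ℝ, t • v ∈ S)
    {q : E → ℝ} (hq : Continuous q) (hhom : ∀ (t : ℝ) v, q (t • v) = t ^ 2 * q v)
    (hpos : ∀ v ∈ S, v ≠ 0 → 0 < q v) : ∃ c > 0, ∀ v ∈ S, c * ‖v‖ ^ 2 ≤ q v := by
  have hq0 : q 0 = 0 := by simpa using hhom 0 0
  have hunit : ∀ v ∈ S, v ≠ 0 → ‖v‖⁻¹ • v ∈ Metric.sphere 0 1 ∩ S := fun v hv hv0 =>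
    ⟨by rw [mem_sphere_zero_iff_norm, norm_smul, norm_inv, norm_norm,
      inv_mul_cancel₀ (norm_ne_zero_iff.2 hv0)], hsmul v hv _⟩
  by_cases hK : (Metric.sphere (0 : E) 1 ∩ S).Nonempty
  · obtain ⟨v₀, hv₀, hmin⟩ :=
      ((isCompact_sphere 0 1).inter_right hS).exists_isMinOn hK hq.continuousOn
    refine ⟨q v₀, hpos v₀ hv₀.2 (ne_zero_of_mem_unit_sphere ⟨v₀, hv₀.1⟩), fun v hv => ?_⟩
    rcases eq_or_ne v 0 with rfl | hv0
    · simp [hq0]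
    · have hle : q v₀ ≤ (‖v‖ ^ 2)⁻¹ * q v := by
        simpa [hhom, inv_pow] using hmin (hunit v hv hv0)
      rwa [← le_div_iff₀ (by positivity), div_eq_inv_mul]
  · refine ⟨1, one_pos, fun v hv => ?_⟩
    obtain rfl : v = 0 := by
      by_contra hv0
      exact hK ⟨_, hunit v hv hv0⟩
    simp [hq0]

lemma exists_pos_mul_norm_sq_le_dirichletSum [Fintype V] {w : V → V → ℝ} {μ : V → ℝ}
    (hnn : ∀ x y, 0 ≤ w x y) (hμ : ∀ x, 0 < μ x)
    (hconn : (SimpleGraph.fromRel fun x y => 0 < w x y).Connected) :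
    ∃ c > 0, ∀ v : V → ℝ, ∑ x, μ x * v x = 0 → c * ‖v‖ ^ 2 ≤ dirichletSum w v := by
  have hclosed : IsClosed {v : V → ℝ | ∑ x, μ x * v x = 0} :=
    isClosed_eq (by fun_prop) continuous_const
  have hsmul : ∀ v ∈ {v : V → ℝ | ∑ x, μ x * v x = 0}, ∀ t : ℝ,
      t • v ∈ {v : V → ℝ | ∑ x, μ x * v x = 0} := fun v (hv : ∑ x, μ x * v x = 0) t =>
    show ∑ x, μ x * (t • v) x = 0 by
      simp only [Pi.smul_apply, smul_eq_mul, mul_left_comm (μ _) t, ← mul_sum, hv, mul_zero]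
  refine exists_pos_mul_norm_sq_le hclosed hsmul continuous_dirichletSum dirichletSum_smul
    fun v hv hv0 => (dirichletSum_nonneg hnn v).lt_of_ne' fun h => hv0 ?_
  obtain ⟨x₀⟩ := hconn.nonempty
  have hconst : ∀ x, v x = v x₀ := fun x => eq_of_dirichletSum_eq_zero hnn hconn h x x₀
  have hvol : 0 < ∑ x, μ x := sum_pos (fun x _ => hμ x) ⟨x₀, mem_univ _⟩
  have hv₀ : (∑ x, μ x) * v x₀ = 0 := by
    rw [sum_mul, ← hv.out]
    exact sum_congr rfl fun x _ => by rw [hconst x]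
  funext x
  rw [hconst x, (mul_eq_zero.1 hv₀).resolve_left hvol.ne', Pi.zero_apply]

lemma mul_exp_sum_div_le_sum_mul_exp [Fintype V] {μ : V → ℝ} (hμ : ∀ x, 0 < μ x)
    [Nonempty V] (u : V → ℝ) :
    (∑ x, μ x) * exp ((∑ x, μ x * u x) / ∑ x, μ x) ≤ ∑ x, μ x * exp (u x) := by
  have hvol : 0 < ∑ x, μ x := sum_pos (fun x _ => hμ x) univ_nonempty
  have hjensen := convexOn_exp.map_sum_le (t := univ) (w := fun x => μ x / ∑ x, μ x) (p := u)
    (fun x _ => (div_pos (hμ x) hvol).le) (by rw [← sum_div, div_self hvol.ne'])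
    (fun x _ => Set.mem_univ _)
  simp only [smul_eq_mul, div_mul_eq_mul_div, ← sum_div] at hjensen
  rwa [le_div_iff₀ hvol, mul_comm] at hjensen

lemma mul_sq_sub_mul_ge {c : ℝ} (hc : 0 < c) (B s : ℝ) :
    c / 8 * s ^ 2 - 2 * B ^ 2 / c ≤ c / 4 * s ^ 2 - B * s := by
  have h : c * (2 * B ^ 2 / c) = 2 * B ^ 2 := by field_simp
  nlinarith [sq_nonneg (c * s - 4 * B)]

lemma mul_exp_sub_mul_ge {m β : ℝ} (hm : 0 < m) (hβ : 0 < β) (a : ℝ) :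
    β / 2 * |a| - 9 * β ^ 2 / (4 * m) ≤ m * exp a - β * a := by
  have hC : m * (9 * β ^ 2 / (4 * m)) = 9 * β ^ 2 / 4 := by field_simp
  rcases le_or_gt a 0 with ha | ha
  · rw [abs_of_nonpos ha]
    nlinarith [exp_pos a, div_nonneg (by positivity : 0 ≤ 9 * β ^ 2) (by positivity : 0 ≤ 4 * m)]
  · rw [abs_of_pos ha]
    -- `exp a = exp (a/2) ^ 2 ≥ (1 + a/2) ^ 2 ≥ a ^ 2 / 4`
    have hsq : a ^ 2 / 4 ≤ exp a := by
      have h := add_one_le_exp (a / 2)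
      rw [show exp a = exp (a / 2) ^ 2 by rw [← exp_nat_mul]; ring_nf]
      nlinarith
    have hsquare : m * (m * (a ^ 2 / 4) - 3 * β / 2 * a + 9 * β ^ 2 / (4 * m)) =
        (m * a - 3 * β) ^ 2 / 4 := by
      rw [mul_add, hC]; ring
    have : 0 ≤ m * (a ^ 2 / 4) - 3 * β / 2 * a + 9 * β ^ 2 / (4 * m) :=
      nonneg_of_mul_nonneg_right (hsquare ▸ by positivity) hm
    nlinarith [mul_le_mul_of_nonneg_left hsq hm.le]

section Energy

variable [Fintype V] {w : V → V → ℝ} {μ g : V → ℝ}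

lemma continuous_bogomolnyiEnergy : Continuous (bogomolnyiEnergy w μ g) := by
  have := continuous_dirichletSum (w := w)
  unfold bogomolnyiEnergy
  fun_prop

lemma bogomolnyiEnergy_ge (hμ : ∀ x, 0 < μ x) [Nonempty V] {c : ℝ}
    (hpoinc : ∀ v : V → ℝ, ∑ x, μ x * v x = 0 → c * ‖v‖ ^ 2 ≤ dirichletSum w v) (u : V → ℝ) :
    let a := (∑ x, μ x * u x) / ∑ x, μ x
    c / 4 * ‖fun x => u x - a‖ ^ 2 - (∑ x, |μ x * g x|) * ‖fun x => u x - a‖ +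
      ((∑ x, μ x) * exp a - (∑ x, μ x * g x) * a) ≤ bogomolnyiEnergy w μ g u := by
  intro a
  set v : V → ℝ := fun x => u x - a
  have hvol : 0 < ∑ x, μ x := sum_pos (fun x _ => hμ x) univ_nonempty
  have hmean : ∑ x, μ x * v x = 0 := by
    simp only [v, mul_sub, sum_sub_distrib, ← sum_mul, a]
    field_simp
    ring
  have hlin : ∑ x, μ x * g x * u x = (∑ x, μ x * g x) * a + ∑ x, μ x * g x * v x := by
    simp only [v, mul_sub, sum_sub_distrib, sum_mul]
    ring
  have hrem : ∑ x, μ x * g x * v x ≤ (∑ x, |μ x * g x|) * ‖v‖ := by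
    rw [sum_mul]
    refine sum_le_sum fun x _ => (le_abs_self _).trans ?_
    rw [abs_mul]
    exact mul_le_mul_of_nonneg_left ((Real.norm_eq_abs (v x)).symm ▸ norm_le_pi_norm v x)
      (abs_nonneg _)
  have hJ : bogomolnyiEnergy w μ g u =
      dirichletSum w v / 4 + ∑ x, μ x * exp (u x) - ∑ x, μ x * g x * u x := by
    simp only [bogomolnyiEnergy, v, dirichletSum_sub_const, mul_sub, sum_sub_distrib, mul_assoc]
    ring
  rw [hJ, hlin]
  linarith [hpoinc v hmean, mul_exp_sum_div_le_sum_mul_exp hμ u]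

lemma exists_norm_le_of_bogomolnyiEnergy_le (hnn : ∀ x y, 0 ≤ w x y) (hμ : ∀ x, 0 < μ x)
    (hconn : (SimpleGraph.fromRel fun x y => 0 < w x y).Connected) (hg : 0 < ∑ x, μ x * g x)
    (K : ℝ) : ∃ R, ∀ u, bogomolnyiEnergy w μ g u ≤ K → ‖u‖ ≤ R := by
  have : Nonempty V := hconn.nonempty
  obtain ⟨c, hc, hpoinc⟩ := exists_pos_mul_norm_sq_le_dirichletSum hnn hμ hconn
  have hvol : 0 < ∑ x, μ x := sum_pos (fun x _ => hμ x) univ_nonempty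
  set β := ∑ x, μ x * g x
  set B := ∑ x, |μ x * g x|
  set M := K + 2 * B ^ 2 / c + 9 * β ^ 2 / (4 * ∑ x, μ x)
  refine ⟨8 * M / c + 1 + 2 * M / β, fun u hu => ?_⟩
  set a := (∑ x, μ x * u x) / ∑ x, μ x
  set v : V → ℝ := fun x => u x - a
  have hquad := mul_sq_sub_mul_ge hc B ‖v‖
  have hexp := mul_exp_sub_mul_ge hvol hg a
  have hJ := bogomolnyiEnergy_ge (g := g) hμ hpoinc u
  have hv : ‖v‖ ≤ 8 * M / c + 1 := by
    have : ‖v‖ ^ 2 ≤ 8 * M / c := by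
      rw [le_div_iff₀ hc]
      nlinarith [abs_nonneg a, sq_nonneg ‖v‖]
    nlinarith [sq_nonneg (‖v‖ - 1)]
  have ha : |a| ≤ 2 * M / β := by
    rw [le_div_iff₀ hg]
    nlinarith [abs_nonneg a, sq_nonneg ‖v‖]
  calc ‖u‖ = ‖v + fun _ => a‖ := by congr 1; ext x; simp [v]
    _ ≤ ‖v‖ + |a| := (norm_add_le _ _).trans (add_le_add_right (pi_norm_const_le a) _)
    _ ≤ 8 * M / c + 1 + 2 * M / β := add_le_add hv ha

lemma exists_isMin_bogomolnyiEnergy (hnn : ∀ x y, 0 ≤ w x y) (hμ : ∀ x, 0 < μ x)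
    (hconn : (SimpleGraph.fromRel fun x y => 0 < w x y).Connected) (hg : 0 < ∑ x, μ x * g x) :
    ∃ u, ∀ v, bogomolnyiEnergy w μ g u ≤ bogomolnyiEnergy w μ g v := by
  obtain ⟨R, hR⟩ := exists_norm_le_of_bogomolnyiEnergy_le hnn hμ hconn hg (bogomolnyiEnergy w μ g 0)
  refine continuous_bogomolnyiEnergy.exists_forall_le' 0 ?_
  filter_upwards [tendsto_norm_cocompact_atTop.eventually_gt_atTop R] with u hu
  by_contra hlt
  exact (hR u (not_le.1 hlt).le).not_gt hu

end Energy

section EulerLagrange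

variable [Fintype V] {w : V → V → ℝ} {μ g : V → ℝ}

lemma hasDerivAt_bogomolnyiEnergy_line (hsym : ∀ x y, w x y = w y x) (hμ : ∀ x, μ x ≠ 0)
    (u φ : V → ℝ) :
    HasDerivAt (fun t : ℝ => bogomolnyiEnergy w μ g (u + t • φ))
      (∑ x, μ x * φ x * (exp (u x) - g x - lap w μ u x)) 0 := by
  have hline : ∀ x, HasDerivAt (fun t : ℝ => (u + t • φ) x) (φ x) 0 := fun x => by
    simpa using ((hasDerivAt_id (0 : ℝ)).mul_const (φ x)).const_add (u x)
  have hdir : HasDerivAt (fun t : ℝ => dirichletSum w (u + t • φ))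
      (∑ x, ∑ y, w x y * (2 * (u y - u x) * (φ y - φ x))) 0 := by
    refine HasDerivAt.fun_sum fun x _ => HasDerivAt.fun_sum fun y _ => ?_
    simpa using (((hline y).sub (hline x)).pow 2).const_mul (w x y)
  have hpot : HasDerivAt (fun t : ℝ => ∑ x, μ x * (exp ((u + t • φ) x) - g x * (u + t • φ) x))
      (∑ x, μ x * (exp (u x) * φ x - g x * φ x)) 0 := by
    refine HasDerivAt.fun_sum fun x _ => ?_
    simpa using (((hline x).exp).sub ((hline x).const_mul (g x))).const_mul (μ x)
  refine ((hdir.div_const 4).add hpot).congr_deriv ?_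
  have hgreen := sum_mul_mul_lap hsym hμ φ u
  have hdir' : ∑ x, ∑ y, w x y * (2 * (u y - u x) * (φ y - φ x)) =
      2 * ∑ x, ∑ y, w x y * (φ y - φ x) * (u y - u x) := by
    simp only [mul_sum]
    exact sum_congr rfl fun x _ => sum_congr rfl fun y _ => by ring
  have hsplit : ∑ x, μ x * φ x * (exp (u x) - g x - lap w μ u x) =
      ∑ x, μ x * (exp (u x) * φ x - g x * φ x) - ∑ x, μ x * φ x * lap w μ u x := by
    rw [← sum_sub_distrib]
    exact sum_congr rfl fun x _ => by ring
  rw [hsplit, hdir', hgreen]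
  ring

lemma lap_eq_of_isMin_bogomolnyiEnergy (hsym : ∀ x y, w x y = w y x) (hμ : ∀ x, 0 < μ x)
    {u : V → ℝ} (hmin : ∀ v, bogomolnyiEnergy w μ g u ≤ bogomolnyiEnergy w μ g v) (x : V) :
    lap w μ u x = exp (u x) - g x := by
  set r : V → ℝ := fun x => exp (u x) - g x - lap w μ u x
  have hlocal : IsLocalMin (fun t : ℝ => bogomolnyiEnergy w μ g (u + t • r)) 0 :=
    Eventually.of_forall fun t => by simpa using hmin (u + t • r)
  have hzero : ∑ x, μ x * r x * r x = 0 :=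
    hlocal.hasDerivAt_eq_zero (hasDerivAt_bogomolnyiEnergy_line hsym (fun x => (hμ x).ne') u r)
  have hrx := (sum_eq_zero_iff_of_nonneg fun x _ => by
    rw [mul_assoc]; exact mul_nonneg (hμ x).le (mul_self_nonneg (r x))).1 hzero x (mem_univ x)
  rw [mul_assoc, mul_eq_zero, mul_self_eq_zero] at hrx
  linarith [hrx.resolve_left (hμ x).ne']

end EulerLagrange

lemma sub_mul_exp_sub_pos {a b : ℝ} (h : a ≠ b) : 0 < (a - b) * (exp a - exp b) := by
  rcases h.lt_or_gt with h | h
  · exact mul_pos_of_neg_of_neg (sub_neg.2 h) (sub_neg.2 (exp_lt_exp.2 h))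
  · exact mul_pos (sub_pos.2 h) (sub_pos.2 (exp_lt_exp.2 h))

section MeanFieldEquation

variable [Fintype V] {w : V → V → ℝ} {μ g : V → ℝ}

lemma sum_mul_pos_of_lap_eq_exp_sub [Nonempty V] (hsym : ∀ x y, w x y = w y x)
    (hμ : ∀ x, 0 < μ x) {u : V → ℝ} (hu : ∀ x, lap w μ u x = exp (u x) - g x) :
    0 < ∑ x, μ x * g x := by
  have hint := sum_mul_lap hsym (fun x => (hμ x).ne') u
  simp only [hu, mul_sub, sum_sub_distrib, sub_eq_zero] at hint
  exact hint ▸ sum_pos (fun x _ => mul_pos (hμ x) (exp_pos _)) univ_nonempty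

lemma eq_of_lap_eq_exp_sub (hsym : ∀ x y, w x y = w y x) (hnn : ∀ x y, 0 ≤ w x y)
    (hμ : ∀ x, 0 < μ x) {u₁ u₂ : V → ℝ} (h₁ : ∀ x, lap w μ u₁ x = exp (u₁ x) - g x)
    (h₂ : ∀ x, lap w μ u₂ x = exp (u₂ x) - g x) : u₁ = u₂ := by
  have hlap : ∀ x, μ x * (u₁ - u₂) x * lap w μ (u₁ - u₂) x =
      μ x * ((u₁ x - u₂ x) * (exp (u₁ x) - exp (u₂ x))) := fun x => by
    rw [lap_sub, h₁, h₂, Pi.sub_apply]; ring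
  have hterm : ∀ x, 0 ≤ μ x * ((u₁ x - u₂ x) * (exp (u₁ x) - exp (u₂ x))) := fun x => by
    refine mul_nonneg (hμ x).le ?_
    rcases eq_or_ne (u₁ x) (u₂ x) with h | h
    · simp [h]
    · exact (sub_mul_exp_sub_pos h).le
  by_contra hne
  obtain ⟨x, hx⟩ := Function.ne_iff.1 hne
  have hpos : 0 < ∑ x, μ x * (u₁ - u₂) x * lap w μ (u₁ - u₂) x := by
    simp only [hlap]
    exact sum_pos' (fun x _ => hterm x)
      ⟨x, mem_univ x, mul_pos (hμ x) (sub_mul_exp_sub_pos hx)⟩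
  rw [sum_mul_self_mul_lap hsym (fun x => (hμ x).ne')] at hpos
  linarith [dirichletSum_nonneg hnn (u₁ - u₂)]

theorem existsUnique_lap_eq_exp_sub_iff (hsym : ∀ x y, w x y = w y x)
    (hnn : ∀ x y, 0 ≤ w x y) (hμ : ∀ x, 0 < μ x)
    (hconn : (SimpleGraph.fromRel fun x y => 0 < w x y).Connected) :
    (∃! u : V → ℝ, ∀ x, lap w μ u x = exp (u x) - g x) ↔ 0 < ∑ x, μ x * g x := by
  have : Nonempty V := hconn.nonempty
  refine ⟨fun ⟨u, hu, _⟩ => sum_mul_pos_of_lap_eq_exp_sub hsym hμ hu, fun hg => ?_⟩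
  obtain ⟨u, hmin⟩ := exists_isMin_bogomolnyiEnergy hnn hμ hconn hg
  have hu := lap_eq_of_isMin_bogomolnyiEnergy hsym hμ hmin
  exact ⟨u, hu, fun v hv => eq_of_lap_eq_exp_sub hsym hnn hμ hv hu⟩

end MeanFieldEquation

lemma sum_mul_dirac [Fintype V] [DecidableEq V] {μ : V → ℝ} {z : V} (hz : μ z ≠ 0) :
    ∑ x, μ x * dirac μ z x = 1 := by
  simp [dirac, hz]

theorem bogomolnyi_main_general [Fintype V] [DecidableEq V]
    (w : V → V → ℝ) (μ : V → ℝ)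
    (hsym : ∀ x y, w x y = w y x) (hnn : ∀ x y, 0 ≤ w x y)
    (hμ : ∀ x, 0 < μ x)
    (hconn : (SimpleGraph.fromRel fun x y => 0 < w x y).Connected)
    (k : ℕ) (z : Fin k → V)
    (n : Fin k → ℕ) (N : ℕ) (hN : N = ∑ s, n s) :
    (∃! u : V → ℝ, ∀ x, lap w μ u x =
      Real.exp (u x) - 1 + 4 * π * ∑ s, (n s : ℝ) * dirac μ (z s) x) ↔
    4 * π * (N : ℝ) < ∑ x, μ x := by
  set g : V → ℝ := fun x => 1 - 4 * π * ∑ s, (n s : ℝ) * dirac μ (z s) x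
  have hmass : ∑ x, μ x * g x = ∑ x, μ x - 4 * π * N := by
    have hdirac : ∀ s, ∑ x, μ x * dirac μ (z s) x = 1 := fun s => sum_mul_dirac (hμ (z s)).ne'
    simp only [g, mul_sub, mul_one, sum_sub_distrib, mul_sum]
    rw [sum_comm, hN, Nat.cast_sum, mul_sum]
    congr 1
    refine sum_congr rfl fun s _ => ?_
    calc ∑ x, μ x * (4 * π * (n s * dirac μ (z s) x))
        = 4 * π * n s * ∑ x, μ x * dirac μ (z s) x :=
          by rw [mul_sum]; exact sum_congr rfl fun x _ => by ring
      _ = 4 * π * n s := by rw [hdirac s, mul_one]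
  have heq : ∀ u : V → ℝ, (∀ x, lap w μ u x =
      exp (u x) - 1 + 4 * π * ∑ s, (n s : ℝ) * dirac μ (z s) x) ↔
      ∀ x, lap w μ u x = exp (u x) - g x :=
    fun u => forall_congr' fun x => by simp only [g, sub_sub_eq_add_sub, add_sub_right_comm]
  rw [existsUnique_congr heq, existsUnique_lap_eq_exp_sub_iff hsym hnn hμ hconn, hmass, sub_pos]

theorem bogomolnyi_main [Fintype V] [DecidableEq V]
    (w : V → V → ℝ) (μ : V → ℝ)
    (hsym : ∀ x y, w x y = w y x) (hnn : ∀ x y, 0 ≤ w x y)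
    (hμ : ∀ x, 0 < μ x)
    (hconn : (SimpleGraph.fromRel fun x y => 0 < w x y).Connected)
    (k : ℕ) (z : Fin k → V) (hz : Function.Injective z)
    (n : Fin k → ℕ) (hn : ∀ s, 0 < n s) (N : ℕ) (hN : N = ∑ s, n s) :
    (∃! u : V → ℝ, ∀ x, lap w μ u x =
      Real.exp (u x) - 1 + 4 * π * ∑ s, (n s : ℝ) * dirac μ (z s) x) ↔
    4 * π * (N : ℝ) < ∑ x, μ x :=
  bogomolnyi_main_general w μ hsym hnn hμ hconn k z n N hN
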